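/- Let μ be a probability measure and f a measurable function such that ‖f‖_{L^k(μ)} ≤ γk for all positive integers k, for some constant γ > 0. Then ∫ exp(|f|/(2γe)) dμ ≤ 2. -/
import Mathlib

open MeasureTheory
open scoped Nat

noncomputable section

private lemma exp_eq_tsum' (t : ℝ) : Real.exp t = ∑' n : ℕ, t ^ n / n ! := by
  rw [Real.exp_eq_exp_ℝ, NormedSpace.exp_eq_tsum_div]

/-- If `‖f‖_{L^k(μ)} ≤ γk` for all positive integers `k`, then `∫ exp(|f|/(2γe)) dμ ≤ 2`. -/
theorem stmt8 {α : Type*} [MeasurableSpace α] (μ : Measure α) [IsProbabilityMeasure μ]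
    (f : α → ℝ) (γ : ℝ) (hγ : 0 < γ)
    (h : ∀ k : ℕ, 0 < k → (∫ x, |f x| ^ (k : ℝ) ∂μ) ^ (1 / (k : ℝ)) ≤ γ * k) :
    ∫ x, Real.exp (|f x| / (2 * γ * Real.exp 1)) ∂μ ≤ 2 := by
  set c : ℝ := 2 * γ * Real.exp 1 with hc
  have hcpos : 0 < c := by positivity
  by_cases hint : Integrable (fun x => Real.exp (|f x| / c)) μ
  · -- `|f|` is a.e.-measurable
    have hg : AEMeasurable (fun x => |f x|) μ := by
      have h1 : AEMeasurable (fun x => Real.exp (|f x| / c)) μ := hint.aemeasurable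
      have h2 : AEMeasurable (fun x => Real.log (Real.exp (|f x| / c)) * c) μ :=
        (Real.measurable_log.comp_aemeasurable h1).mul_const c
      simpa [Real.log_exp, div_mul_cancel₀ _ hcpos.ne'] using h2
    -- each `|f|^k` is integrable, dominated by the exponential
    have hik : ∀ k : ℕ, Integrable (fun x => |f x| ^ k) μ := by
      intro k
      have hCpos : (0:ℝ) < c ^ k * k ! := by positivity
      have hdom : Integrable (fun x => (c ^ k * k !) * Real.exp (|f x| / c)) μ :=
        hint.const_mul _
      refine hdom.mono' (hg.pow_const k).aestronglyMeasurable (.of_forall fun x => ?_)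
      have ht : (0:ℝ) ≤ |f x| / c := div_nonneg (abs_nonneg _) hcpos.le
      have hexp := Real.pow_div_factorial_le_exp _ ht k
      rw [Real.norm_eq_abs, abs_of_nonneg (pow_nonneg (abs_nonneg _) k)]
      calc |f x| ^ k = (c ^ k * k !) * ((|f x| / c) ^ k / k !) := by
            rw [div_pow]
            field_simp
        _ ≤ (c ^ k * k !) * Real.exp (|f x| / c) :=
            mul_le_mul_of_nonneg_left hexp hCpos.le
    -- the moment bound, in real form
    have hbk : ∀ k : ℕ, 0 < k → (∫ x, |f x| ^ k ∂μ) ≤ (γ * k) ^ k := by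
      intro k hk
      have hnn : (0:ℝ) ≤ ∫ x, |f x| ^ k ∂μ :=
        integral_nonneg fun x => pow_nonneg (abs_nonneg _) _
      have h' := h k hk
      simp only [Real.rpow_natCast] at h'
      have h'' : ((∫ x, |f x| ^ k ∂μ) ^ (1 / (k:ℝ))) ^ k ≤ (γ * k) ^ k := by
        apply pow_le_pow_left₀ (Real.rpow_nonneg hnn _) h'
      rwa [one_div, Real.rpow_inv_natCast_pow hnn hk.ne'] at h''
    -- the key lintegral bound
    have key : ∫⁻ x, ENNReal.ofReal (Real.exp (|f x| / c)) ∂μ ≤ ENNReal.ofReal 2 := by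
      have heq : ∀ x, ENNReal.ofReal (Real.exp (|f x| / c))
          = ∑' k : ℕ, ENNReal.ofReal ((|f x| / c) ^ k / k !) := by
        intro x
        rw [exp_eq_tsum' (|f x| / c)]
        exact ENNReal.ofReal_tsum_of_nonneg (fun k => by positivity)
          (Real.summable_pow_div_factorial _)
      calc ∫⁻ x, ENNReal.ofReal (Real.exp (|f x| / c)) ∂μ
          = ∑' k : ℕ, ∫⁻ x, ENNReal.ofReal ((|f x| / c) ^ k / k !) ∂μ := by
            simp_rw [heq]
            exact lintegral_tsum fun k =>
              (ENNReal.measurable_ofReal.comp_aemeasurable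
                (((hg.div_const c).pow_const k).div_const _))
        _ ≤ ∑' k : ℕ, ENNReal.ofReal ((1/2) ^ k) := by
            refine ENNReal.tsum_le_tsum fun k => ?_
            rcases Nat.eq_zero_or_pos k with rfl | hk
            · simp
            · -- rewrite the integrand
              have hrw : ∀ x : α, ENNReal.ofReal ((|f x| / c) ^ k / k !)
                  = ENNReal.ofReal (|f x| ^ k) * ENNReal.ofReal (1 / (c ^ k * k !)) := by
                intro x
                rw [← ENNReal.ofReal_mul (pow_nonneg (abs_nonneg _) _), div_pow]
                congr 1
                field_simp
              have hli : ∫⁻ x, ENNReal.ofReal (|f x| ^ k) ∂μ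
                  = ENNReal.ofReal (∫ x, |f x| ^ k ∂μ) :=
                (ofReal_integral_eq_lintegral_ofReal (hik k)
                  (.of_forall fun x => pow_nonneg (abs_nonneg _) _)).symm
              calc ∫⁻ x, ENNReal.ofReal ((|f x| / c) ^ k / k !) ∂μ
                  = (∫⁻ x, ENNReal.ofReal (|f x| ^ k) ∂μ) * ENNReal.ofReal (1 / (c ^ k * k !)) := by
                    simp_rw [hrw]
                    exact lintegral_mul_const'' _
                      (ENNReal.measurable_ofReal.comp_aemeasurable (hg.pow_const k))
                _ ≤ ENNReal.ofReal ((γ * k) ^ k) * ENNReal.ofReal (1 / (c ^ k * k !)) := by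
                    gcongr
                    rw [hli]
                    exact ENNReal.ofReal_le_ofReal (hbk k hk)
                _ = ENNReal.ofReal ((γ * k) ^ k * (1 / (c ^ k * k !))) :=
                    (ENNReal.ofReal_mul (by positivity)).symm
                _ ≤ ENNReal.ofReal ((1/2) ^ k) := by
                    apply ENNReal.ofReal_le_ofReal
                    -- arithmetic: (γk)^k / (c^k k!) ≤ 2⁻ᵏ  since k^k ≤ e^k k!
                    have hfac : (k:ℝ) ^ k ≤ Real.exp 1 ^ k * k ! := by
                      have h1 := Real.pow_div_factorial_le_exp (x := (k:ℝ)) (Nat.cast_nonneg k) k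
                      have h2 : Real.exp (k:ℝ) = Real.exp 1 ^ k := by
                        rw [← Real.exp_nat_mul]; ring_nf
                      rw [div_le_iff₀ (by positivity : (0:ℝ) < (k ! : ℝ))] at h1
                      calc (k:ℝ) ^ k ≤ Real.exp (k:ℝ) * k ! := h1
                        _ = Real.exp 1 ^ k * k ! := by rw [h2]
                    have hck : c ^ k = 2 ^ k * γ ^ k * Real.exp 1 ^ k := by
                      rw [hc]; ring
                    rw [mul_one_div, div_le_iff₀ (by positivity)]
                    calc (γ * k) ^ k = γ ^ k * (k:ℝ) ^ k := by rw [mul_pow]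
                      _ ≤ γ ^ k * (Real.exp 1 ^ k * k !) :=
                          mul_le_mul_of_nonneg_left hfac (by positivity)
                      _ = (1/2) ^ k * (c ^ k * k !) := by
                          rw [hck, div_pow, one_pow]
                          field_simp
        _ = ENNReal.ofReal 2 := by
            rw [← ENNReal.ofReal_tsum_of_nonneg (fun k => by positivity)
              summable_geometric_two, tsum_geometric_two]
    rw [integral_eq_lintegral_of_nonneg_ae (.of_forall fun x => (Real.exp_pos _).le)
      hint.aestronglyMeasurable]
    exact ENNReal.toReal_le_of_le_ofReal (by norm_num) key
  · rw [integral_undef hint]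
    norm_num
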